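/- arXiv:1101.1438 — 4 statements merged into one kernel-verified Lean document; each statement's English description precedes it below -/
import Mathlib

section
/- Let C be a cost function on integer intervals and K a constant such that for all t < s < T, C(t+1,s) + C(s+1,T) + K ≤ C(t+1,T). Let F be defined recursively by F(0) = -β and F(s) = min over 0 ≤ t < s of [F(t) + C(t+1,s) + β]. If F(t) + C(t+1,s) + K ≥ F(s) for some t < s, then for every T > s we have F(t) + C(t+1,T) ≥ F(s) + C(s+1,T), i.e., t can never be the optimal last changepoint prior to T. -/
theorem pelt_pruning_general (C : ℕ → ℕ → ℝ) (K : ℝ) (F : ℕ → ℝ)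
    (hsub : ∀ t s T : ℕ, t < s → s < T → C (t + 1) s + C (s + 1) T + K ≤ C (t + 1) T)
    (t s : ℕ) (hts : t < s)
    (hprune : F t + C (t + 1) s + K ≥ F s) :
    ∀ T : ℕ, s < T → F t + C (t + 1) T ≥ F s + C (s + 1) T := by
  intro T hsT
  calc F s + C (s + 1) T
      ≤ F t + C (t + 1) s + K + C (s + 1) T := by gcongr
    _ = F t + (C (t + 1) s + C (s + 1) T + K) := by ring
    _ ≤ F t + C (t + 1) T := by gcongr; exact hsub t s T hts hsT

/-- PELT pruning theorem: if `F t + C (t+1) s + K ≥ F s` then for every `T > s`,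
`t` can never be the optimal last changepoint prior to `T`. -/
theorem pelt_pruning (C : ℕ → ℕ → ℝ) (β K : ℝ) (F : ℕ → ℝ)
    (hsub : ∀ t s T : ℕ, t < s → s < T → C (t + 1) s + C (s + 1) T + K ≤ C (t + 1) T)
    (hF0 : F 0 = -β)
    (hFrec : ∀ (s : ℕ) (hs : 0 < s),
      F s = (Finset.range s).inf' (Finset.nonempty_range_iff.mpr hs.ne')
        (fun t => F t + C (t + 1) s + β))
    (t s : ℕ) (hts : t < s)
    (hprune : F t + C (t + 1) s + K ≥ F s) :
    ∀ T : ℕ, s < T → F t + C (t + 1) T ≥ F s + C (s + 1) T :=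
  pelt_pruning_general C K F hsub t s hts hprune
end

section
/- Let f : ℝ → ℝ be concave and differentiable, and for each nonnegative integer m let G(m) denote the minimal total segment cost over all segmentations with exactly m changepoints. Let m̂ minimize m ↦ β·f(m) + G(m) over nonnegative integers. Then m̂ also minimizes m ↦ m·β·f'(m̂) + G(m). That is, the optimal segmentation under the concave penalty β·f(m) is also optimal under the linear penalty with constant γ = β·f'(m̂). -/
/-! The tangent line `ℓ(m) = f(m̂) + f'(m̂)(m - m̂)` lies above the concave `f` and touches it at
`m̂`. Replacing `β f` by `β ℓ` therefore raises the objective everywhere except at `m̂`, so `m̂`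
stays a minimizer; up to the constant `β (f(m̂) - m̂ f'(m̂))` the new objective is the linearly
penalized one. -/

theorem ConcaveOn.le_add_deriv_mul_sub {S : Set ℝ} {f : ℝ → ℝ} (hf : ConcaveOn ℝ S f)
    {x y : ℝ} (hx : x ∈ S) (hy : y ∈ S) (hfy : DifferentiableAt ℝ f y) :
    f x ≤ f y + deriv f y * (x - y) := by
  rcases lt_trichotomy x y with hxy | rfl | hyx
  · have hslope := hf.deriv_le_slope hx hy hxy hfy
    rw [slope_def_field, le_div_iff₀ (sub_pos.2 hxy)] at hslope
    linarith
  · simp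
  · have hslope := hf.slope_le_deriv hy hx hyx hfy
    rw [slope_def_field, div_le_iff₀ (sub_pos.2 hyx)] at hslope
    linarith

/-- If `m̂` minimizes the concave-penalized objective `β f(m) + G(m)`, then `m̂`
also minimizes the linearly penalized objective `m·β·f'(m̂) + G(m)`. -/
theorem concave_penalty_optimal (f : ℝ → ℝ) (hconc : ConcaveOn ℝ Set.univ f)
    (hdiff : Differentiable ℝ f) (G : ℕ → ℝ) (β : ℝ) (hβ : 0 < β)
    (mhat : ℕ) (hmin : ∀ m : ℕ, β * f mhat + G mhat ≤ β * f m + G m) :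
    ∀ m : ℕ, (mhat : ℝ) * (β * deriv f mhat) + G mhat ≤ (m : ℝ) * (β * deriv f mhat) + G m := by
  intro m
  set c := f mhat - deriv f mhat * mhat
  have tangent : f m ≤ f mhat + deriv f mhat * (m - mhat) :=
    hconc.le_add_deriv_mul_sub (Set.mem_univ _) (Set.mem_univ _) (hdiff mhat)
  calc (mhat : ℝ) * (β * deriv f mhat) + G mhat
      = β * f mhat + G mhat - β * c := by ring
    _ ≤ β * f m + G m - β * c := by linarith [hmin m]
    _ ≤ β * (f mhat + deriv f mhat * (m - mhat)) + G m - β * c := by gcongr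
    _ = (m : ℝ) * (β * deriv f mhat) + G m := by ring
end

section
/- Suppose for every T > s the best last-changepoint-at-s segmentation beats the best last-changepoint-at-t segmentation, i.e., F(t)+C(t+1,s)+K ≥ F(s) and C satisfies the splitting condition with constant K. Then removing t from all future candidate sets does not change the sequence of computed optimal values: min_{τ ∈ R, τ ≠ t}[F(τ)+C(τ+1,T)+β] = min_{τ ∈ R}[F(τ)+C(τ+1,T)+β] for any candidate set R containing both t and s with T > s. -/
theorem Finset.inf'_erase_of_le {α γ : Type*} [DecidableEq α] [SemilatticeInf γ]
    {s : Finset α} {f : α → γ} {a b : α} (ha : a ∈ s) (hb : b ∈ s.erase a)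
    (hba : f b ≤ f a) :
    (s.erase a).inf' ⟨b, hb⟩ f = s.inf' ⟨a, ha⟩ f := by
  apply le_antisymm
  · refine Finset.le_inf' _ _ fun x hx => ?_
    by_cases hxa : x = a
    · subst hxa
      exact (Finset.inf'_le _ hb).trans hba
    · exact Finset.inf'_le _ (Finset.mem_erase.mpr ⟨hxa, hx⟩)
  · exact Finset.le_inf' _ _ fun x hx => Finset.inf'_le _ (Finset.mem_of_mem_erase hx)

theorem pruned_candidate_removable_general (C : ℕ → ℕ → ℝ) (β K : ℝ) (F : ℕ → ℝ)
    (hsub : ∀ t s T : ℕ, t < s → s < T → C (t + 1) s + C (s + 1) T + K ≤ C (t + 1) T)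
    (t s T : ℕ) (hts : t < s) (hsT : s < T)
    (R : Finset ℕ) (htR : t ∈ R) (hsR : s ∈ R)
    (hprune : F t + C (t + 1) s + K ≥ F s) :
    (R.erase t).inf' ⟨s, Finset.mem_erase.mpr ⟨Nat.ne_of_gt hts, hsR⟩⟩
        (fun τ => F τ + C (τ + 1) T + β)
      = R.inf' ⟨t, htR⟩ (fun τ => F τ + C (τ + 1) T + β) := by
  have hdom : F s + C (s + 1) T + β ≤ F t + C (t + 1) T + β := by
    linarith [hsub t s T hts hsT]
  exact Finset.inf'_erase_of_le htR (Finset.mem_erase.mpr ⟨Nat.ne_of_gt hts, hsR⟩) hdom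

/-- Removing a pruned candidate `t` from a candidate set `R` containing `s`
does not change the computed minimum at any future time `T > s`. -/
theorem pruned_candidate_removable (C : ℕ → ℕ → ℝ) (β K : ℝ) (F : ℕ → ℝ)
    (hsub : ∀ t s T : ℕ, t < s → s < T → C (t + 1) s + C (s + 1) T + K ≤ C (t + 1) T)
    (hF0 : F 0 = -β)
    (hFrec : ∀ (u : ℕ) (hu : 0 < u),
      F u = (Finset.range u).inf' (Finset.nonempty_range_iff.mpr hu.ne')
        (fun v => F v + C (v + 1) u + β))
    (t s T : ℕ) (hts : t < s) (hsT : s < T)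
    (R : Finset ℕ) (htR : t ∈ R) (hsR : s ∈ R) (hRsub : R ⊆ Finset.range T)
    (hprune : F t + C (t + 1) s + K ≥ F s) :
    (R.erase t).inf' ⟨s, Finset.mem_erase.mpr ⟨Nat.ne_of_gt hts, hsR⟩⟩
        (fun τ => F τ + C (τ + 1) T + β)
      = R.inf' ⟨t, htR⟩ (fun τ => F τ + C (τ + 1) T + β) :=
  pruned_candidate_removable_general C β K F hsub t s T hts hsT R htR hsR hprune
end

section
/- If the cost function satisfies C(t+1,s) + C(s+1,T) ≤ C(t+1,T) for all t < s < T (i.e., K = 0), and a candidate t satisfies F(t) + C(t+1,s) > F(s), then for every T > s, the segmentation ending with last changepoint at s has strictly smaller objective value than any segmentation ending with last changepoint at t: F(s) + C(s+1,T) + β < F(t) + C(t+1,T) + β. -/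
theorem pelt_pruning_strict_general (C : ℕ → ℕ → ℝ) (β : ℝ) (F : ℕ → ℝ)
    (hsub : ∀ t s T : ℕ, t < s → s < T → C (t + 1) s + C (s + 1) T ≤ C (t + 1) T)
    (t s : ℕ) (hts : t < s)
    (hprune : F t + C (t + 1) s > F s) :
    ∀ T : ℕ, s < T → F s + C (s + 1) T + β < F t + C (t + 1) T + β := by
  intro T hT
  calc F s + C (s + 1) T + β
      < F t + C (t + 1) s + C (s + 1) T + β := by linarith
    _ ≤ F t + C (t + 1) T + β := by linarith [hsub t s T hts hT]

/-- Strict PELT pruning for `K = 0`: if `F t + C (t+1) s > F s` then for every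
`T > s` the last-changepoint-at-`s` objective is strictly smaller than the
last-changepoint-at-`t` objective. -/
theorem pelt_pruning_strict (C : ℕ → ℕ → ℝ) (β : ℝ) (F : ℕ → ℝ)
    (hsub : ∀ t s T : ℕ, t < s → s < T → C (t + 1) s + C (s + 1) T ≤ C (t + 1) T)
    (hF0 : F 0 = -β)
    (hFrec : ∀ (s : ℕ) (hs : 0 < s),
      F s = (Finset.range s).inf' (Finset.nonempty_range_iff.mpr hs.ne')
        (fun t => F t + C (t + 1) s + β))
    (t s : ℕ) (hts : t < s)
    (hprune : F t + C (t + 1) s > F s) :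
    ∀ T : ℕ, s < T → F s + C (s + 1) T + β < F t + C (t + 1) T + β :=
  pelt_pruning_strict_general C β F hsub t s hts hprune
end
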